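/- arXiv:1409.7847 — 5 statements merged into one kernel-verified Lean document; each statement's English description precedes it below -/
import Mathlib

section
/- Let V be a finite-dimensional real Hilbert space, M ⊆ V a convex open subset, and f : M → V continuously differentiable such that (i) there exists A₀ ∈ M with Df[A₀] positive definite, and (ii) for all A ∈ M the derivative Df[A] is invertible and self-adjoint. Then ⟨Df[A].H, H⟩ > 0 for all A ∈ M and all nonzero H ∈ V, and consequently f is strictly monotone on M, i.e. ⟨f(A)−f(B), A−B⟩ > 0 for all A ≠ B in M. -/
/-!
Operators with positive definite quadratic form and operators whose quadratic form takes a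
negative value form two disjoint open sets; the first is open because the unit sphere is
compact. A symmetric injective operator lies in one of them: if its form is nonnegative,
Cauchy–Schwarz for `(x, y) ↦ ⟪T x, y⟫` shows that `⟪T x, x⟫ = 0` forces `T x = 0`.
Hence the preconnected image `f' '' M` stays in the positive definite set, which it meets
at `A₀`. Strict monotonicity follows from the mean value theorem applied to
`t ↦ ⟪f (B + t • (A - B)), A - B⟫`.
-/

open scoped RealInnerProductSpace
open Set Function

section

variable {V : Type*} [NormedAddCommGroup V] [InnerProductSpace ℝ V]

theorem LinearMap.IsPositive.inner_map_self_pos_of_injective {T : V →ₗ[ℝ] V}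
    (hT : T.IsPositive) (hinj : Injective T) {x : V} (hx : x ≠ 0) : 0 < ⟪T x, x⟫ := by
  set B : LinearMap.BilinForm ℝ V := LinearMap.BilinForm.compLeft (innerₗ V) T
  have hB : LinearMap.IsSymm B := ⟨fun x y => (hT.isSymmetric x y).trans (real_inner_comm _ _)⟩
  refine (hT.inner_nonneg_left x).lt_of_ne' fun h => hx (hinj ?_)
  have hBx : B x = 0 := (B.apply_apply_same_eq_zero_iff hT.inner_nonneg_left hB).1 h
  have hTx : ⟪T x, T x⟫ = 0 := LinearMap.congr_fun hBx (T x)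
  rw [inner_self_eq_zero.1 hTx, map_zero]

theorem LinearMap.IsSymmetric.inner_map_self_pos_or_exists_neg {T : V →ₗ[ℝ] V}
    (hT : T.IsSymmetric) (hinj : Injective T) :
    (∀ x, x ≠ 0 → 0 < ⟪T x, x⟫) ∨ ∃ x, ⟪T x, x⟫ < 0 := by
  by_contra! h
  obtain ⟨⟨x, hx, hTx⟩, hnonneg⟩ := h
  exact hTx.not_gt (LinearMap.IsPositive.inner_map_self_pos_of_injective
    ⟨hT, fun y => by simpa using hnonneg y⟩ hinj hx)

theorem isOpen_setOf_exists_inner_map_self_neg :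
    IsOpen {T : V →L[ℝ] V | ∃ x, ⟪T x, x⟫ < 0} := by
  simp only [ofPred_exists]
  exact isOpen_iUnion fun x => isOpen_lt (by fun_prop) continuous_const

theorem forall_inner_map_self_pos_iff_sphere (T : V →L[ℝ] V) :
    (∀ x, x ≠ 0 → 0 < ⟪T x, x⟫) ↔ ∀ x ∈ Metric.sphere (0 : V) 1, 0 < ⟪T x, x⟫ := by
  refine ⟨fun h x hx => h x (Metric.ne_of_mem_sphere hx one_ne_zero), fun h x hx => ?_⟩
  have hnorm : 0 < ‖x‖⁻¹ := by positivity
  have := h (‖x‖⁻¹ • x) (by simp [norm_smul, hx])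
  rw [map_smul, real_inner_smul_left, real_inner_smul_right] at this
  exact pos_of_mul_pos_right (pos_of_mul_pos_right this hnorm.le) hnorm.le

theorem isOpen_setOf_inner_map_self_pos [ProperSpace V] :
    IsOpen {T : V →L[ℝ] V | ∀ x, x ≠ 0 → 0 < ⟪T x, x⟫} := by
  simp only [forall_inner_map_self_pos_iff_sphere, isOpen_iff_eventually]
  intro T hT
  have hopen : IsOpen {p : (V →L[ℝ] V) × V | 0 < ⟪p.1 p.2, p.2⟫} :=
    isOpen_lt continuous_const (by fun_prop)
  exact (isCompact_sphere 0 1).eventually_forall_of_forall_eventually fun x hx =>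
    hopen.mem_nhds (hT x hx)

theorem IsPreconnected.forall_inner_map_self_pos [ProperSpace V] {M : Set V}
    (hM : IsPreconnected M) {T : V → V →L[ℝ] V} (hT : ContinuousOn T M)
    (hsymm : ∀ A ∈ M, (T A : V →ₗ[ℝ] V).IsSymmetric) (hinj : ∀ A ∈ M, Injective (T A))
    {A₀ : V} (hA₀ : A₀ ∈ M) (hpos : ∀ x, x ≠ 0 → 0 < ⟪T A₀ x, x⟫) :
    ∀ A ∈ M, ∀ x, x ≠ 0 → 0 < ⟪T A x, x⟫ := by
  have hdisj : Disjoint {S : V →L[ℝ] V | ∀ x, x ≠ 0 → 0 < ⟪S x, x⟫} {S | ∃ x, ⟪S x, x⟫ < 0} :=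
    disjoint_left.2 fun S hS ⟨x, hx⟩ =>
      (hS x (by rintro rfl; simp at hx)).not_gt hx
  have hcover : T '' M ⊆ {S | ∀ x, x ≠ 0 → 0 < ⟪S x, x⟫} ∪ {S | ∃ x, ⟪S x, x⟫ < 0} := by
    rintro _ ⟨A, hA, rfl⟩
    exact (hsymm A hA).inner_map_self_pos_or_exists_neg (hinj A hA)
  have himage := (hM.image T hT).subset_left_of_subset_union isOpen_setOf_inner_map_self_pos
    isOpen_setOf_exists_inner_map_self_neg hdisj hcover ⟨T A₀, mem_image_of_mem T hA₀, hpos⟩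
  exact fun A hA => himage (mem_image_of_mem T hA)

theorem Convex.inner_sub_sub_pos_of_hasFDerivAt {M : Set V} (hM : Convex ℝ M) {f : V → V}
    {f' : V → V →L[ℝ] V} (hf : ∀ A ∈ M, HasFDerivAt f (f' A) A)
    (hpos : ∀ A ∈ M, ∀ x, x ≠ 0 → 0 < ⟪f' A x, x⟫) :
    ∀ A ∈ M, ∀ B ∈ M, A ≠ B → 0 < ⟪f A - f B, A - B⟫ := by
  intro A hA B hB hAB
  set γ : ℝ → V := fun t => B + t • (A - B)
  have hγ : ∀ t ∈ Icc (0 : ℝ) 1, γ t ∈ M := fun t ht => hM.add_smul_sub_mem hB hA ht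
  set g : ℝ → ℝ := fun t => ⟪f (γ t), A - B⟫
  have hg : ∀ t ∈ Icc (0 : ℝ) 1, HasDerivAt g ⟪f' (γ t) (A - B), A - B⟫ t := by
    intro t ht
    have hγ' : HasDerivAt γ (A - B) t := by
      simpa only [one_smul] using ((hasDerivAt_id' t).smul_const (A - B)).const_add B
    simpa using ((hf _ (hγ t ht)).comp_hasDerivAt t hγ').inner ℝ (hasDerivAt_const t (A - B))
  obtain ⟨c, hc, hslope⟩ := exists_hasDerivAt_eq_slope g _ zero_lt_one
    (fun t ht => (hg t ht).continuousAt.continuousWithinAt)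
    (fun t ht => hg t (Ioo_subset_Icc_self ht))
  have hg01 : g 1 - g 0 = ⟪f A - f B, A - B⟫ := by simp [g, γ, inner_sub_left]
  rw [sub_zero, div_one, hg01] at hslope
  exact hslope ▸ hpos _ (hγ c (Ioo_subset_Icc_self hc)) _ (sub_ne_zero.2 hAB)

end

theorem stmt_0_general {V : Type*} [NormedAddCommGroup V] [InnerProductSpace ℝ V]
    [FiniteDimensional ℝ V]
    (M : Set V) (hMconv : Convex ℝ M)
    (f : V → V) (f' : V → V →L[ℝ] V)
    (hderiv : ∀ A ∈ M, HasFDerivAt f (f' A) A)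
    (hcont : ContinuousOn f' M)
    (hpos : ∃ A₀ ∈ M, ∀ H : V, H ≠ 0 → 0 < ⟪(f' A₀) H, H⟫)
    (hinv : ∀ A ∈ M, Function.Bijective (f' A))
    (hsa : ∀ A ∈ M, ∀ H K : V, ⟪(f' A) H, K⟫ = ⟪H, (f' A) K⟫) :
    (∀ A ∈ M, ∀ H : V, H ≠ 0 → 0 < ⟪(f' A) H, H⟫) ∧
      (∀ A ∈ M, ∀ B ∈ M, A ≠ B → 0 < ⟪f A - f B, A - B⟫) := by
  obtain ⟨A₀, hA₀, hA₀pos⟩ := hpos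
  have hposM := hMconv.isPreconnected.forall_inner_map_self_pos hcont hsa
    (fun A hA => (hinv A hA).injective) hA₀ hA₀pos
  exact ⟨hposM, hMconv.inner_sub_sub_pos_of_hasFDerivAt hderiv hposM⟩

/-- Lemma 1.1: positive definiteness of a self-adjoint, everywhere invertible derivative
in a single point of a convex open set implies positive definiteness everywhere, and
hence strict monotonicity. -/
theorem stmt_0 {V : Type*} [NormedAddCommGroup V] [InnerProductSpace ℝ V]
    [FiniteDimensional ℝ V]
    (M : Set V) (hMconv : Convex ℝ M) (hMopen : IsOpen M)
    (f : V → V) (f' : V → V →L[ℝ] V)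
    (hderiv : ∀ A ∈ M, HasFDerivAt f (f' A) A)
    (hcont : ContinuousOn f' M)
    (hpos : ∃ A₀ ∈ M, ∀ H : V, H ≠ 0 → 0 < ⟪(f' A₀) H, H⟫)
    (hinv : ∀ A ∈ M, Function.Bijective (f' A))
    (hsa : ∀ A ∈ M, ∀ H K : V, ⟪(f' A) H, K⟫ = ⟪H, (f' A) K⟫) :
    (∀ A ∈ M, ∀ H : V, H ≠ 0 → 0 < ⟪(f' A) H, H⟫) ∧
      (∀ A ∈ M, ∀ B ∈ M, A ≠ B → 0 < ⟪f A - f B, A - B⟫) :=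
  stmt_0_general M hMconv f f' hderiv hcont hpos hinv hsa
end

section
/- Let f : ℝ → ℝ be continuously differentiable. Then the primary matrix function f : Sym(n) → Sym(n) is Hilbert-space monotone, i.e. ⟨f(A)−f(B), A−B⟩ ≥ 0 for all A, B ∈ Sym(n), if and only if f is monotone (nondecreasing) on ℝ. -/
/-!
Diagonalize `A = U diag(a) Uᵀ` and `B = V diag(b) Vᵀ` orthogonally. The entrywise square `P` of
the orthogonal matrix `Uᵀ V` is doubly stochastic, and this turns the trace into
`∑ i j, P i j * (f (a i) - f (b j)) * (a i - b j)`, which is nonnegative when `f` is monotone.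
Conversely, the scalar matrices `y • 1` and `x • 1` give `n * (f y - f x) * (y - x) ≥ 0`.
-/

open Matrix

section

variable {ι : Type*} [Fintype ι] [DecidableEq ι]

theorem hadamard_self_mem_doublyStochastic {R : Matrix ι ι ℝ} (hR : R ∈ orthogonalGroup ι ℝ) :
    R ⊙ R ∈ doublyStochastic ℝ ι := by
  have hrow := (mem_orthogonalGroup_iff _ _).mp hR
  have hcol := (mem_orthogonalGroup_iff' _ _).mp hR
  refine mem_doublyStochastic_iff_sum.mpr ⟨fun i j ↦ mul_self_nonneg _, fun i ↦ ?_, fun j ↦ ?_⟩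
  · simpa [mul_apply] using congrFun (congrFun hrow i) i
  · simpa [mul_apply] using congrFun (congrFun hcol j) j

theorem sum_mul_sub_mul_sub_of_mem_doublyStochastic {R : Type*} [CommRing R] [PartialOrder R]
    [IsOrderedRing R] {P : Matrix ι ι R} (hP : P ∈ doublyStochastic R ι) (x u y v : ι → R) :
    ∑ i, ∑ j, P i j * ((x i - u j) * (y i - v j)) =
      ∑ i, x i * y i - ∑ i, ∑ j, P i j * x i * v j - ∑ i, ∑ j, P i j * y i * u j +
        ∑ j, u j * v j := by
  have hxy : ∑ i, x i * y i = ∑ i, ∑ j, P i j * (x i * y i) := by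
    simp [← Finset.sum_mul, sum_row_of_mem_doublyStochastic hP]
  have huv : ∑ j, u j * v j = ∑ i, ∑ j, P i j * (u j * v j) := by
    rw [Finset.sum_comm]
    simp [← Finset.sum_mul, sum_col_of_mem_doublyStochastic hP]
  rw [hxy, huv]
  simp only [← Finset.sum_sub_distrib, ← Finset.sum_add_distrib]
  refine Finset.sum_congr rfl fun i _ ↦ Finset.sum_congr rfl fun j _ ↦ ?_
  ring

theorem trace_diagonal_mul_mul_diagonal_mul_transpose {K : Type*} [CommRing K] (R : Matrix ι ι K)
    (x y : ι → K) :
    (diagonal x * R * diagonal y * Rᵀ).trace = ∑ i, ∑ j, (R ⊙ R) i j * x i * y j := by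
  simp only [trace, diag, mul_apply, transpose_apply, hadamard_apply, diagonal_apply, ite_mul,
    mul_ite, zero_mul, mul_zero, Finset.sum_ite_eq, Finset.sum_ite_eq', Finset.mem_univ, if_true]
  refine Finset.sum_congr rfl fun i _ ↦ Finset.sum_congr rfl fun j _ ↦ ?_
  ring

theorem trace_conj_diagonal_mul_conj_diagonal {K : Type*} [CommRing K] (U V : Matrix ι ι K)
    (x y : ι → K) :
    (U * diagonal x * Uᵀ * (V * diagonal y * Vᵀ)).trace =
      ∑ i, ∑ j, ((Uᵀ * V) ⊙ (Uᵀ * V)) i j * x i * y j := calc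
  _ = (U * (diagonal x * Uᵀ * (V * diagonal y * Vᵀ))).trace := by simp only [Matrix.mul_assoc]
  _ = (diagonal x * Uᵀ * (V * diagonal y * Vᵀ) * U).trace := trace_mul_comm _ _
  _ = (diagonal x * (Uᵀ * V) * diagonal y * (Uᵀ * V)ᵀ).trace := by
    simp only [transpose_mul, transpose_transpose, Matrix.mul_assoc]
  _ = _ := trace_diagonal_mul_mul_diagonal_mul_transpose _ x y

theorem trace_conj_diagonal_mul_conj_diagonal_self {U : Matrix ι ι ℝ}
    (hU : U ∈ orthogonalGroup ι ℝ) (x y : ι → ℝ) :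
    (U * diagonal x * Uᵀ * (U * diagonal y * Uᵀ)).trace = ∑ i, x i * y i := by
  rw [trace_conj_diagonal_mul_conj_diagonal, (mem_orthogonalGroup_iff' _ _).mp hU]
  simp [hadamard_apply, one_apply]

theorem trace_sub_conj_diagonal_mul_sub_conj_diagonal {U V : Matrix ι ι ℝ}
    (hU : U ∈ orthogonalGroup ι ℝ) (hV : V ∈ orthogonalGroup ι ℝ) (x u y v : ι → ℝ) :
    ((U * diagonal x * Uᵀ - V * diagonal u * Vᵀ) *
        (U * diagonal y * Uᵀ - V * diagonal v * Vᵀ)).trace =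
      ∑ i, ∑ j, ((Uᵀ * V) ⊙ (Uᵀ * V)) i j * ((x i - u j) * (y i - v j)) := by
  have hP := hadamard_self_mem_doublyStochastic
    (mul_mem (transpose_mem_unitaryGroup_iff.mpr hU) hV)
  rw [sum_mul_sub_mul_sub_of_mem_doublyStochastic hP, sub_mul, mul_sub, mul_sub, trace_sub,
    trace_sub, trace_sub, trace_conj_diagonal_mul_conj_diagonal_self hU,
    trace_conj_diagonal_mul_conj_diagonal_self hV, trace_conj_diagonal_mul_conj_diagonal,
    trace_mul_comm (V * _ * _), trace_conj_diagonal_mul_conj_diagonal]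
  ring

end

theorem Matrix.IsSymm.exists_orthogonal_diagonalization {ι : Type*} [Fintype ι] [DecidableEq ι]
    {A : Matrix ι ι ℝ} (hA : A.IsSymm) :
    ∃ U ∈ orthogonalGroup ι ℝ, ∃ d : ι → ℝ, A = U * diagonal d * Uᵀ := by
  have hA' : A.IsHermitian := isHermitian_iff_isSymm.mpr hA
  refine ⟨hA'.eigenvectorUnitary, hA'.eigenvectorUnitary.2, hA'.eigenvalues, ?_⟩
  conv_lhs => rw [hA'.spectral_theorem]
  simp [Unitary.conjStarAlgAut_apply, star_eq_conjTranspose]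

theorem stmt_5_general {n : ℕ} (hn : 0 < n) (f : ℝ → ℝ)
    (fm : Matrix (Fin n) (Fin n) ℝ → Matrix (Fin n) (Fin n) ℝ)
    (hfm : ∀ (Q : Matrix (Fin n) (Fin n) ℝ) (d : Fin n → ℝ), Qᵀ * Q = 1 →
      fm (Qᵀ * Matrix.diagonal d * Q) = Qᵀ * Matrix.diagonal (f ∘ d) * Q) :
    (∀ A B : Matrix (Fin n) (Fin n) ℝ, A.IsSymm → B.IsSymm →
      0 ≤ ((fm A - fm B) * (A - B)).trace) ↔ Monotone f := by
  have hfm_conj : ∀ U ∈ orthogonalGroup (Fin n) ℝ, ∀ d,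
      fm (U * diagonal d * Uᵀ) = U * diagonal (f ∘ d) * Uᵀ := fun U hU d ↦ by
    simpa using hfm Uᵀ d (by simpa using (mem_orthogonalGroup_iff _ _).mp hU)
  have hfm_diagonal : ∀ d, fm (diagonal d) = diagonal (f ∘ d) := fun d ↦ by
    simpa using hfm_conj 1 (one_mem _) d
  rw [← monovary_id_iff, monovary_iff_forall_mul_nonneg]
  constructor
  · intro H x y
    have h := H (diagonal fun _ ↦ y) (diagonal fun _ ↦ x) (isSymm_diagonal _) (isSymm_diagonal _)
    rw [hfm_diagonal, hfm_diagonal, diagonal_sub, diagonal_sub, diagonal_mul_diagonal,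
      trace_diagonal] at h
    simpa [hn] using h
  · intro hmono A B hA hB
    obtain ⟨U, hU, a, rfl⟩ := hA.exists_orthogonal_diagonalization
    obtain ⟨V, hV, b, rfl⟩ := hB.exists_orthogonal_diagonalization
    rw [hfm_conj U hU a, hfm_conj V hV b, trace_sub_conj_diagonal_mul_sub_conj_diagonal hU hV]
    exact Finset.sum_nonneg fun i _ ↦ Finset.sum_nonneg fun j _ ↦
      mul_nonneg (mul_self_nonneg _) (hmono (b j) (a i))

/-- A primary matrix function induced by a continuously differentiable `f : ℝ → ℝ` is
Hilbert-space monotone on the symmetric matrices if and only if `f` is nondecreasing. -/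
theorem stmt_5 {n : ℕ} (hn : 0 < n) (f : ℝ → ℝ) (hf : ContDiff ℝ 1 f)
    (fm : Matrix (Fin n) (Fin n) ℝ → Matrix (Fin n) (Fin n) ℝ)
    (hfm : ∀ (Q : Matrix (Fin n) (Fin n) ℝ) (d : Fin n → ℝ), Qᵀ * Q = 1 →
      fm (Qᵀ * Matrix.diagonal d * Q) = Qᵀ * Matrix.diagonal (f ∘ d) * Q) :
    (∀ A B : Matrix (Fin n) (Fin n) ℝ, A.IsSymm → B.IsSymm →
      0 ≤ ((fm A - fm B) * (A - B)).trace) ↔ Monotone f :=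
  stmt_5_general hn f fm hfm
end

section
/- Let f : ℝ → ℝ be analytic with f'(t) > 0 for all t. Then the primary matrix function f : Sym(n) → Sym(n) is strictly Hilbert-space monotone: ⟨f(A)−f(B), A−B⟩ > 0 for all A ≠ B ∈ Sym(n). -/
/-!
Diagonalize `A = Q₁ᵀ diag(x) Q₁` and `B = Q₂ᵀ diag(y) Q₂` orthogonally. The matrix
`S = Q₁ Q₂ᵀ` is orthogonal, so `(S i j ^ 2)` is doubly stochastic, and this turns the trace into
`⟨f(A) - f(B), A - B⟩ = ∑ i j, S i j ^ 2 * (f (x i) - f (y j)) * (x i - y j)`.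
Every term is nonnegative since `f` is strictly increasing. The same identity with `f = id` gives
`‖A - B‖² = ∑ i j, S i j ^ 2 * (x i - y j) ^ 2 > 0`, so some term has `S i j ≠ 0` and
`x i ≠ y j`, and that term is positive.
-/

open Matrix Finset

section StrictMono

variable {α : Type*} [Ring α] [LinearOrder α] [IsStrictOrderedRing α] {f : α → α}

theorem StrictMono.sub_mul_sub_pos (hf : StrictMono f) {a b : α} (hab : a ≠ b) :
    0 < (f a - f b) * (a - b) := by
  rcases hab.lt_or_gt with h | h
  · exact mul_pos_of_neg_of_neg (sub_neg.2 (hf h)) (sub_neg.2 h)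
  · exact mul_pos (sub_pos.2 (hf h)) (sub_pos.2 h)

theorem StrictMono.sub_mul_sub_nonneg (hf : StrictMono f) (a b : α) :
    0 ≤ (f a - f b) * (a - b) := by
  rcases eq_or_ne a b with rfl | hab
  · simp
  · exact (hf.sub_mul_sub_pos hab).le

theorem StrictMono.sum_sum_mul_sub_mul_sub_pos {ι κ : Type*} [Fintype ι] [Fintype κ]
    (hf : StrictMono f) {w : ι → κ → α} {a : ι → α} {b : κ → α} (hw : ∀ i j, 0 ≤ w i j)
    (h : 0 < ∑ i, ∑ j, w i j * ((a i - b j) * (a i - b j))) :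
    0 < ∑ i, ∑ j, w i j * ((f (a i) - f (b j)) * (a i - b j)) := by
  have hterm : ∀ i j, 0 ≤ w i j * ((f (a i) - f (b j)) * (a i - b j)) :=
    fun i j => mul_nonneg (hw i j) (hf.sub_mul_sub_nonneg _ _)
  obtain ⟨i, -, hi⟩ : ∃ i ∈ univ, 0 < ∑ j, w i j * ((a i - b j) * (a i - b j)) :=
    exists_lt_of_sum_lt (by simpa using h)
  obtain ⟨j, -, hij⟩ : ∃ j ∈ univ, 0 < w i j * ((a i - b j) * (a i - b j)) :=
    exists_lt_of_sum_lt (by simpa using hi)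
  have hw_pos : 0 < w i j := (hw i j).lt_of_ne (by rintro h0; simp [← h0] at hij)
  have hne : a i ≠ b j := by rintro h0; simp [h0] at hij
  exact sum_pos' (fun i _ => sum_nonneg fun j _ => hterm i j) ⟨i, mem_univ _,
    sum_pos' (fun j _ => hterm i j) ⟨j, mem_univ _, mul_pos hw_pos (hf.sub_mul_sub_pos hne)⟩⟩

end StrictMono

namespace Matrix

theorem IsSymm.exists_orthogonal_conj_diagonal {n : Type*} [Fintype n] [DecidableEq n]
    {A : Matrix n n ℝ} (hA : A.IsSymm) :
    ∃ (Q : Matrix n n ℝ) (d : n → ℝ), Qᵀ * Q = 1 ∧ A = Qᵀ * diagonal d * Q := by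
  have hH : A.IsHermitian := by
    rwa [IsHermitian, conjTranspose_eq_transpose_of_trivial]
  set U : Matrix n n ℝ := (hH.eigenvectorUnitary : Matrix n n ℝ)
  have hU : star U = Uᵀ := conjTranspose_eq_transpose_of_trivial U
  refine ⟨Uᵀ, hH.eigenvalues, ?_, ?_⟩
  · rw [transpose_transpose, ← hU]
    exact Unitary.coe_mul_star_self _
  · rw [transpose_transpose, ← hU]
    simpa using hH.spectral_theorem

theorem IsSymm.trace_mul_self_pos {n : Type*} [Fintype n] {M : Matrix n n ℝ} (hM : M.IsSymm)
    (h0 : M ≠ 0) : 0 < (M * M).trace := by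
  have hMH : Mᴴ = M := (conjTranspose_eq_transpose_of_trivial M).trans hM
  have hnonneg := (posSemidef_conjTranspose_mul_self M).trace_nonneg
  have hne := trace_conjTranspose_mul_self_eq_zero_iff.not.mpr h0
  rw [hMH] at hnonneg hne
  exact hnonneg.lt_of_ne (Ne.symm hne)

theorem sum_sq_apply_eq_one_of_mul_transpose_eq_one {m n α : Type*} [Fintype n] [DecidableEq m]
    [CommRing α] {S : Matrix m n α} (hS : S * Sᵀ = 1) (i : m) : ∑ j, S i j ^ 2 = 1 := by
  simpa [mul_apply, sq] using congr_fun (congr_fun hS i) i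

variable {m n k α : Type*} [Fintype m] [Fintype n] [Fintype k] [CommRing α]

theorem trace_conj_mul_conj [DecidableEq m] {Q : Matrix m n α} (hQ : Q * Qᵀ = 1)
    (X Y : Matrix m m α) : ((Qᵀ * X * Q) * (Qᵀ * Y * Q)).trace = (X * Y).trace := by
  calc ((Qᵀ * X * Q) * (Qᵀ * Y * Q)).trace = (X * (Q * Qᵀ) * Y * (Q * Qᵀ)).trace := by
        rw [Matrix.mul_assoc, Matrix.mul_assoc, trace_mul_comm]
        simp only [Matrix.mul_assoc]
    _ = (X * Y).trace := by rw [hQ, Matrix.mul_one, Matrix.mul_one]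

theorem trace_conj_diagonal_mul_conj_diagonal [DecidableEq m] [DecidableEq k]
    (Q : Matrix m n α) (R : Matrix k n α) (x : m → α) (y : k → α) :
    ((Qᵀ * diagonal x * Q) * (Rᵀ * diagonal y * R)).trace
      = ∑ i, ∑ j, (Q * Rᵀ) i j ^ 2 * (x i * y j) := by
  have hcycle : ((Qᵀ * diagonal x * Q) * (Rᵀ * diagonal y * R)).trace
      = (diagonal x * (Q * Rᵀ) * diagonal y * (Q * Rᵀ)ᵀ).trace := by
    rw [transpose_mul, transpose_transpose]
    simp only [Matrix.mul_assoc]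
    rw [trace_mul_comm]
    simp only [Matrix.mul_assoc]
  rw [hcycle]
  simp only [trace, diag, mul_apply (M := diagonal x * (Q * Rᵀ) * diagonal y), mul_diagonal,
    diagonal_mul, transpose_apply]
  refine sum_congr rfl fun i _ => sum_congr rfl fun j _ => ?_
  ring

theorem sum_sq_apply_mul_sub_mul_sub {S : Matrix m k α} (hrow : ∀ i, ∑ j, S i j ^ 2 = 1)
    (hcol : ∀ j, ∑ i, S i j ^ 2 = 1) (x u : m → α) (y v : k → α) :
    ∑ i, ∑ j, S i j ^ 2 * ((x i - y j) * (u i - v j))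
      = ∑ i, x i * u i - ∑ i, ∑ j, S i j ^ 2 * (x i * v j)
        - ∑ i, ∑ j, S i j ^ 2 * (u i * y j) + ∑ j, y j * v j := by
  have hxu : ∑ i, x i * u i = ∑ i, ∑ j, S i j ^ 2 * (x i * u i) := by
    simp only [← sum_mul, hrow, one_mul]
  have hyv : ∑ j, y j * v j = ∑ i, ∑ j, S i j ^ 2 * (y j * v j) := by
    rw [sum_comm]
    simp only [← sum_mul, hcol, one_mul]
  rw [hxu, hyv, ← sum_sub_distrib, ← sum_sub_distrib, ← sum_add_distrib]
  refine sum_congr rfl fun i _ => ?_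
  rw [← sum_sub_distrib, ← sum_sub_distrib, ← sum_add_distrib]
  refine sum_congr rfl fun j _ => ?_
  ring

theorem trace_sub_mul_sub_conj_diagonal [DecidableEq n] {Q₁ Q₂ : Matrix n n α}
    (h₁ : Q₁ᵀ * Q₁ = 1) (h₂ : Q₂ᵀ * Q₂ = 1) (x y u v : n → α) :
    ((Q₁ᵀ * diagonal x * Q₁ - Q₂ᵀ * diagonal y * Q₂) *
      (Q₁ᵀ * diagonal u * Q₁ - Q₂ᵀ * diagonal v * Q₂)).trace
      = ∑ i, ∑ j, (Q₁ * Q₂ᵀ) i j ^ 2 * ((x i - y j) * (u i - v j)) := by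
  have h₁' : Q₁ * Q₁ᵀ = 1 := mul_eq_one_comm.mp h₁
  have h₂' : Q₂ * Q₂ᵀ = 1 := mul_eq_one_comm.mp h₂
  have hS : (Q₁ * Q₂ᵀ) * (Q₁ * Q₂ᵀ)ᵀ = 1 := by
    rw [transpose_mul, transpose_transpose, Matrix.mul_assoc, ← Matrix.mul_assoc Q₂ᵀ, h₂,
      Matrix.one_mul, h₁']
  have hSt : (Q₁ * Q₂ᵀ)ᵀ * (Q₁ * Q₂ᵀ)ᵀᵀ = 1 := by
    rw [transpose_transpose, transpose_mul, transpose_transpose, Matrix.mul_assoc,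
      ← Matrix.mul_assoc Q₁ᵀ, h₁, Matrix.one_mul, h₂']
  rw [sum_sq_apply_mul_sub_mul_sub (sum_sq_apply_eq_one_of_mul_transpose_eq_one hS)
    (sum_sq_apply_eq_one_of_mul_transpose_eq_one hSt), sub_mul, mul_sub, mul_sub, trace_sub,
    trace_sub, trace_sub, trace_conj_mul_conj h₁', trace_conj_mul_conj h₂',
    trace_mul_comm (Q₂ᵀ * diagonal y * Q₂), trace_conj_diagonal_mul_conj_diagonal,
    trace_conj_diagonal_mul_conj_diagonal, diagonal_mul_diagonal, diagonal_mul_diagonal,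
    trace_diagonal, trace_diagonal]
  ring

end Matrix

theorem stmt_6_general {n : ℕ} (f : ℝ → ℝ)
    (hf' : ∀ t : ℝ, 0 < deriv f t)
    (fm : Matrix (Fin n) (Fin n) ℝ → Matrix (Fin n) (Fin n) ℝ)
    (hfm : ∀ (Q : Matrix (Fin n) (Fin n) ℝ) (d : Fin n → ℝ), Qᵀ * Q = 1 →
      fm (Qᵀ * Matrix.diagonal d * Q) = Qᵀ * Matrix.diagonal (f ∘ d) * Q) :
    ∀ A B : Matrix (Fin n) (Fin n) ℝ, A.IsSymm → B.IsSymm → A ≠ B →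
      0 < ((fm A - fm B) * (A - B)).trace := by
  intro A B hA hB hAB
  obtain ⟨Q₁, x, h₁, rfl⟩ := hA.exists_orthogonal_conj_diagonal
  obtain ⟨Q₂, y, h₂, rfl⟩ := hB.exists_orthogonal_conj_diagonal
  rw [hfm _ _ h₁, hfm _ _ h₂, trace_sub_mul_sub_conj_diagonal h₁ h₂]
  refine (strictMono_of_deriv_pos hf').sum_sum_mul_sub_mul_sub_pos (fun i j => sq_nonneg _) ?_
  rw [← trace_sub_mul_sub_conj_diagonal h₁ h₂ x y x y]
  exact (hA.sub hB).trace_mul_self_pos (sub_ne_zero.mpr hAB)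

/-- If `f : ℝ → ℝ` is analytic with `f' > 0` everywhere, then the induced primary matrix
function is strictly Hilbert-space monotone on the symmetric matrices. -/
theorem stmt_6 {n : ℕ} (f : ℝ → ℝ) (hf : ∀ t : ℝ, AnalyticAt ℝ f t)
    (hf' : ∀ t : ℝ, 0 < deriv f t)
    (fm : Matrix (Fin n) (Fin n) ℝ → Matrix (Fin n) (Fin n) ℝ)
    (hfm : ∀ (Q : Matrix (Fin n) (Fin n) ℝ) (d : Fin n → ℝ), Qᵀ * Q = 1 →
      fm (Qᵀ * Matrix.diagonal d * Q) = Qᵀ * Matrix.diagonal (f ∘ d) * Q) :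
    ∀ A B : Matrix (Fin n) (Fin n) ℝ, A.IsSymm → B.IsSymm → A ≠ B →
      0 < ((fm A - fm B) * (A - B)).trace :=
  stmt_6_general f hf' fm hfm
end

section
/- For every positive definite symmetric matrix A and symmetric H, H̃, the operator L(H) = ∫₀¹ (t(A−𝟙)+𝟙)⁻¹ H (t(A−𝟙)+𝟙)⁻¹ dt (the Fréchet derivative of the principal matrix logarithm at A) is self-adjoint with respect to the Frobenius inner product and positive semi-definite: ⟨L(H), H̃⟩ = ⟨H, L(H̃)⟩ and ⟨L(H), H⟩ ≥ 0. -/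
/-!
With `C t = (t • (A - 1) + 1)⁻¹`, which is symmetric positive definite for `t ∈ [0, 1]`, each
integrand `H ↦ C t * H * C t` is self-adjoint for `⟪X, Y⟫ = tr (Xᵀ * Y)` because `C t` is
symmetric, and `⟪C H C, H⟫ = tr ((Hᵀ C H) C) ≥ 0` as the trace of a product of two positive
semidefinite matrices. Pairing with a fixed matrix is a continuous linear functional, so both
properties pass to the integral.
-/

open Matrix MeasureTheory

attribute [local instance] Matrix.normedAddCommGroup Matrix.normedSpace

theorem Matrix.PosDef.smul_sub_one_add_one {m : Type*} [DecidableEq m] {A : Matrix m m ℝ}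
    (hA : A.PosDef) {t : ℝ} (ht : t ∈ Set.Icc (0 : ℝ) 1) : (t • (A - 1) + 1).PosDef := by
  obtain rfl | ht₀ := ht.1.eq_or_lt
  · simpa using PosDef.one
  have hconvex : t • (A - 1) + 1 = t • A + (1 - t) • (1 : Matrix m m ℝ) := by
    rw [smul_sub, sub_smul, one_smul]; abel
  rw [hconvex]
  exact (hA.smul ht₀).add_posSemidef (PosSemidef.one.smul (sub_nonneg.mpr ht.2))

variable {m : Type*} [Fintype m]

open scoped ComplexOrder MatrixOrder in
theorem Matrix.PosSemidef.trace_mul_nonneg {𝕜 : Type*} [RCLike 𝕜] {A B : Matrix m m 𝕜}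
    (hA : A.PosSemidef) (hB : B.PosSemidef) : 0 ≤ (A * B).trace := by
  classical
  obtain ⟨S, rfl⟩ := CStarAlgebra.nonneg_iff_eq_star_mul_self.mp hB.nonneg
  rw [star_eq_conjTranspose, ← mul_assoc, trace_mul_comm]
  simpa only [mul_assoc] using (hA.mul_mul_conjTranspose_same S).trace_nonneg

theorem Matrix.trace_transpose_mul_comm {n R : Type*} [Fintype n] [CommSemiring R]
    (X Y : Matrix m n R) : (Xᵀ * Y).trace = (Yᵀ * X).trace := by
  rw [← trace_transpose, transpose_mul, transpose_transpose]

theorem Matrix.IsSymm.trace_transpose_mul_conj_comm {R : Type*} [CommSemiring R]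
    {C : Matrix m m R} (hC : C.IsSymm) (G H : Matrix m m R) :
    (Gᵀ * (C * H * C)).trace = (Hᵀ * (C * G * C)).trace := by
  rw [trace_transpose_mul_comm, transpose_mul, transpose_mul, hC.eq, mul_assoc, mul_assoc,
    trace_mul_comm]
  simp only [mul_assoc]

theorem Matrix.PosSemidef.trace_transpose_mul_conj_nonneg {C : Matrix m m ℝ}
    (hC : C.PosSemidef) (H : Matrix m m ℝ) : 0 ≤ (Hᵀ * (C * H * C)).trace := by
  have hHCH : (Hᵀ * C * H).PosSemidef := by
    simpa only [conjTranspose_eq_transpose_of_trivial] using hC.conjTranspose_mul_mul_same H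
  simpa only [mul_assoc] using hHCH.trace_mul_nonneg hC

theorem ContinuousOn.matrix_inv {X K : Type*} [TopologicalSpace X] [Field K] [TopologicalSpace K]
    [IsTopologicalRing K] [ContinuousInv₀ K] [DecidableEq m] {B : X → Matrix m m K}
    {s : Set X} (hB : ContinuousOn B s) (hdet : ∀ x ∈ s, (B x).det ≠ 0) :
    ContinuousOn (fun x => (B x)⁻¹) s := by
  intro x hx
  have hinv : ContinuousAt Ring.inverse (B x).det := by
    simpa only [Ring.inverse_eq_inv'] using continuousAt_inv₀ (hdet x hx)
  exact (continuousAt_matrix_inv _ hinv).comp_continuousWithinAt (hB x hx)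

-- The local normed-group instance induces the product topology only up to unfolding beyond
-- instance reducibility, so instance search does not find this instance by itself.
noncomputable local instance : ENormedAddMonoid (Matrix m m ℝ) :=
  NormedAddGroup.toENormedAddMonoid

theorem Matrix.trace_mul_intervalIntegral (M : Matrix m m ℝ) {f : ℝ → Matrix m m ℝ}
    {a b : ℝ} (hf : IntervalIntegrable f volume a b) :
    (M * ∫ t in a..b, f t).trace = ∫ t in a..b, (M * f t).trace :=
  ((LinearMap.toContinuousLinearMap
    (traceLinearMap m ℝ ℝ ∘ₗ LinearMap.mulLeft ℝ M)).intervalIntegral_comp_comm hf).symm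

/-- For positive definite symmetric `A`, the operator
`H ↦ ∫₀¹ (t(A−𝟙)+𝟙)⁻¹ H (t(A−𝟙)+𝟙)⁻¹ dt` (the Fréchet derivative of the principal matrix
logarithm at `A`) is self-adjoint w.r.t. the Frobenius inner product and positive
semi-definite. -/
theorem stmt_11 {n : ℕ} (A : Matrix (Fin n) (Fin n) ℝ) (hA : A.PosDef)
    (L : Matrix (Fin n) (Fin n) ℝ → Matrix (Fin n) (Fin n) ℝ)
    (hL : ∀ H, L H = ∫ t in (0:ℝ)..1,
      (t • (A - 1) + 1)⁻¹ * H * (t • (A - 1) + 1)⁻¹) :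
    (∀ H Ht : Matrix (Fin n) (Fin n) ℝ, H.IsSymm → Ht.IsSymm →
      ((L H)ᵀ * Ht).trace = (Hᵀ * (L Ht)).trace) ∧
    (∀ H : Matrix (Fin n) (Fin n) ℝ, H.IsSymm → 0 ≤ ((L H)ᵀ * H).trace) := by
  set C : ℝ → Matrix (Fin n) (Fin n) ℝ := fun t => (t • (A - 1) + 1)⁻¹
  have hB_posDef : ∀ t ∈ Set.uIcc (0 : ℝ) 1, (t • (A - 1) + 1).PosDef := by
    rw [Set.uIcc_of_le zero_le_one]
    exact fun t => hA.smul_sub_one_add_one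
  have hC_cont : ContinuousOn C (Set.uIcc 0 1) :=
    ContinuousOn.matrix_inv (by fun_prop) fun t ht => (hB_posDef t ht).det_pos.ne'
  have hpair (G H) :
      (Gᵀ * L H).trace = ∫ t in (0:ℝ)..1, (Gᵀ * (C t * H * C t)).trace := by
    rw [hL H]
    exact trace_mul_intervalIntegral _
      ((hC_cont.mul continuousOn_const).mul hC_cont).intervalIntegrable
  constructor
  · intro H Ht _ _
    rw [trace_transpose_mul_comm, hpair, hpair]
    refine intervalIntegral.integral_congr fun t ht => ?_
    have hC_symm : (C t).IsSymm := isHermitian_iff_isSymm.mp (hB_posDef t ht).inv.isHermitian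
    exact hC_symm.trace_transpose_mul_conj_comm Ht H
  · intro H _
    rw [trace_transpose_mul_comm, hpair]
    refine intervalIntegral.integral_nonneg zero_le_one fun t ht => ?_
    have hC_posDef : (C t).PosDef := (hB_posDef t (Set.Icc_subset_uIcc ht)).inv
    exact hC_posDef.posSemidef.trace_transpose_mul_conj_nonneg H
end

section
/- The function g : PSym(2) → PSym(2), g(C) = det(C)·𝟙, is operator monotone but not Hilbert-space monotone: its derivative Dg[C].H = det(C) tr(HC⁻¹)·𝟙 is positive definite for every positive definite H, yet for A = diag(3,2) and B = diag(5,1) one has ⟨g(B) − g(A), B − A⟩ = −1 < 0. -/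
open Matrix

attribute [local instance] Matrix.normedAddCommGroup Matrix.normedSpace

/-!
Jacobi's formula `D det[C].H = tr(adj(C) H)` follows from the multilinearity of `det` in the
rows: the derivative of a multilinear map replaces one row at a time by the corresponding row of
`H`, and expanding along that row produces the cofactors. For invertible `C`,
`adj(C) = det(C) C⁻¹`, so `Dg[C].H = det(C) tr(H C⁻¹)·𝟙`; this is a positive multiple of `𝟙`
because `tr(H K) = tr(S K Sᴴ) > 0` whenever `H = Sᴴ S` and `K` are positive definite.
The counterexample is a direct computation: `g(B) − g(A) = −𝟙` and `tr(B − A) = 1`.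
-/

namespace Matrix

variable {n : Type*} [Fintype n] [DecidableEq n]

theorem det_updateRow_eq_sum_mul_adjugate {R : Type*} [CommRing R] (C : Matrix n n R) (i : n)
    (v : n → R) : (C.updateRow i v).det = ∑ j, v j * C.adjugate j i := by
  rw [← det_transpose, ← updateCol_transpose, ← cramer_apply, cramer_eq_adjugate_mulVec,
    ← adjugate_transpose]
  simp [mulVec, dotProduct, mul_comm]

theorem hasFDerivAt_det {𝕜 : Type*} [NontriviallyNormedField 𝕜] (C : Matrix n n 𝕜) :
    ∃ L : Matrix n n 𝕜 →L[𝕜] 𝕜, HasFDerivAt det L C ∧ ∀ H, L H = (C.adjugate * H).trace := by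
  let D : ContinuousMultilinearMap 𝕜 (fun _ : n => n → 𝕜) 𝕜 :=
    { detRowAlternating.toMultilinearMap with cont := continuous_id.matrix_det }
  refine ⟨D.linearDeriv C, D.hasFDerivAt C, fun H => ?_⟩
  refine (D.linearDeriv_apply (show n → n → 𝕜 from C) H).trans ?_
  change ∑ i, (updateRow C i (H i)).det = _
  simp only [det_updateRow_eq_sum_mul_adjugate, trace, diag, mul_apply]
  rw [Finset.sum_comm]
  simp only [mul_comm]

theorem adjugate_eq_det_smul_inv {K : Type*} [Field K] {A : Matrix n n K} (h : A.det ≠ 0) :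
    A.adjugate = A.det • A⁻¹ := by
  rw [inv_def, Ring.inverse_eq_inv, smul_smul, mul_inv_cancel₀ h, one_smul]

open scoped MatrixOrder ComplexOrder in
theorem PosDef.trace_mul_pos {𝕜 : Type*} [RCLike 𝕜] [Nonempty n] {A B : Matrix n n 𝕜}
    (hA : A.PosDef) (hB : B.PosDef) : 0 < (A * B).trace := by
  obtain ⟨S, rfl⟩ := CStarAlgebra.nonneg_iff_eq_star_mul_self.mp hA.posSemidef.nonneg
  have hS : IsUnit S := isUnit_of_mul_isUnit_right hA.isUnit
  rw [mul_assoc, trace_mul_comm, mul_assoc, ← mul_assoc]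
  exact (hB.mul_mul_conjTranspose_same (vecMul_injective_iff_isUnit.mpr hS)).trace_pos

end Matrix

/-- The function `g(C) = det(C)·𝟙` on 2×2 positive definite symmetric matrices is operator
monotone (its derivative `H ↦ det(C) tr(H C⁻¹)·𝟙` is positive definite for positive
definite `H`), but not Hilbert-space monotone: for `A = diag(3,2)`, `B = diag(5,1)` one
has `⟨g(B) − g(A), B − A⟩ = −1 < 0`. -/
theorem stmt_16 :
    (∀ C : Matrix (Fin 2) (Fin 2) ℝ, C.PosDef →
      ∃ L : Matrix (Fin 2) (Fin 2) ℝ →L[ℝ] Matrix (Fin 2) (Fin 2) ℝ,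
        HasFDerivAt (fun X : Matrix (Fin 2) (Fin 2) ℝ =>
          X.det • (1 : Matrix (Fin 2) (Fin 2) ℝ)) L C ∧
        ∀ H, L H = (C.det * (H * C⁻¹).trace) • (1 : Matrix (Fin 2) (Fin 2) ℝ)) ∧
    (∀ C H : Matrix (Fin 2) (Fin 2) ℝ, C.PosDef → H.PosDef →
      ((C.det * (H * C⁻¹).trace) • (1 : Matrix (Fin 2) (Fin 2) ℝ)).PosDef) ∧
    (((Matrix.diagonal ![(5:ℝ), 1]).det • (1 : Matrix (Fin 2) (Fin 2) ℝ) -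
        (Matrix.diagonal ![(3:ℝ), 2]).det • (1 : Matrix (Fin 2) (Fin 2) ℝ))ᵀ *
      (Matrix.diagonal ![(5:ℝ), 1] - Matrix.diagonal ![(3:ℝ), 2])).trace = -1 ∧
    (-1 : ℝ) < 0 := by
  refine ⟨fun C hC => ?_, fun C H hC hH => ?_, by norm_num [trace_fin_two], by norm_num⟩
  · obtain ⟨L, hL, hL_apply⟩ := hasFDerivAt_det C
    refine ⟨L.smulRight 1, hL.smul_const 1, fun H => ?_⟩
    rw [ContinuousLinearMap.smulRight_apply, hL_apply, adjugate_eq_det_smul_inv hC.det_pos.ne',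
      smul_mul_assoc, trace_smul, trace_mul_comm, smul_eq_mul]
  · exact PosDef.one.smul (mul_pos hC.det_pos (hH.trace_mul_pos hC.inv))
end
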